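/- arXiv:2309.14898 — 2 statements merged into one kernel-verified Lean document; each statement's English description precedes it below -/
import Mathlib

section
/- Let Q be a seminormal quasi-crystal graph of type A_{n−1} satisfying axioms LQ1 and LQ2, and suppose ë_i(x) = y for some x, y ∈ Q and i ∈ I. (1) If i+1 ∈ I and ε̈_{i+1}(y) = +∞, then ε̈_{i+1}(x) = +∞ and there exists k > 0 such that ë_i^k(y) ≠ ⊥, ε̈_{i+1}(ë_i^k(y)) ∉ {0, +∞}, and for all 0 ≤ l < k one has ε̈_i(ë_i^l(y)) ∉ {0, +∞}. (2) If i−1 ∈ I and φ̈_{i−1}(x) = +∞, then φ̈_{i−1}(y) = +∞ and there exists k > 0 such that f̈_i^k(x) ≠ ⊥, φ̈_{i−1}(f̈_i^k(x)) ∉ {0, +∞}, and for all 0 ≤ l < k one has φ̈_i(f̈_i^l(x)) ∉ {0, +∞}. -/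
open scoped Classical

/-- Integers together with `-∞` (written `⊥`) and `+∞`. -/
abbrev ZE := WithBot (WithTop ℤ)

/-- The canonical inclusion of an integer into `ZE`. -/
def ZE.ofInt (m : ℤ) : ZE := ((m : WithTop ℤ) : ZE)

/-- The element `+∞` of `ZE`. -/
def ZE.top : ZE := ((⊤ : WithTop ℤ) : ZE)

/-- Raw data of a quasi-crystal of type `A_{n-1}`.  Indices are 0-based, so the index
set `I = {1, …, n-1}` of the paper corresponds to `{i : ℕ | i + 1 < n}`, and weights
in `ℤ^n` are represented as functions `ℕ → ℤ` (entries with index `≥ n` play no role). -/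
structure QCData (n : ℕ) (Q : Type*) where
  e : ℕ → Q → Option Q
  f : ℕ → Q → Option Q
  eps : ℕ → Q → ZE
  phi : ℕ → Q → ZE
  wt : Q → ℕ → ℤ

namespace QCData

variable {n : ℕ} {Q Q' : Type*}

/-- The simple root `α_i = e_i - e_{i+1}` (0-based coordinates). -/
def alpha (i : ℕ) : ℕ → ℤ := fun m => if m = i then 1 else if m = i + 1 then -1 else 0

/-- `⟨w, α_i⟩ = w_i - w_{i+1}` (which equals `⟨w, α_i^∨⟩` in type `A`). -/
def pair (w : ℕ → ℤ) (i : ℕ) : ℤ := w i - w (i + 1)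

/-- Axioms Q1–Q4 of a quasi-crystal of type `A_{n-1}` (Definition 3.1). -/
def IsQC (D : QCData n Q) : Prop :=
  (∀ i x y, i + 1 < n → (D.e i x = some y ↔ D.f i y = some x)) ∧
  (∀ i x y, i + 1 < n → D.e i x = some y →
    (∀ m, D.wt y m = D.wt x m + alpha i m) ∧
    D.eps i x = D.eps i y + 1 ∧ D.phi i y = D.phi i x + 1) ∧
  (∀ i x, i + 1 < n → D.phi i x = D.eps i x + ZE.ofInt (pair (D.wt x) i)) ∧
  (∀ i x, i + 1 < n → D.eps i x = ⊥ → D.e i x = none ∧ D.f i x = none) ∧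
  (∀ i x, i + 1 < n → D.eps i x = ZE.top → D.e i x = none ∧ D.f i x = none)

/-- Iterated raising operator `ë_i^k`. -/
def eIter (D : QCData n Q) (i : ℕ) : ℕ → Q → Option Q
  | 0, x => some x
  | k + 1, x => (eIter D i k x).bind (D.e i)

/-- Iterated lowering operator `f̈_i^k`. -/
def fIter (D : QCData n Q) (i : ℕ) : ℕ → Q → Option Q
  | 0, x => some x
  | k + 1, x => (fIter D i k x).bind (D.f i)

/-- Seminormality: whenever `ε̈_i(x) ≠ +∞`, `ε̈_i(x) = max {k : ë_i^k(x) ≠ ⊥}` and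
`φ̈_i(x) = max {k : f̈_i^k(x) ≠ ⊥}`. -/
def Seminormal (D : QCData n Q) : Prop :=
  ∀ i x, i + 1 < n → D.eps i x ≠ ZE.top →
    (∃ k : ℕ, D.eps i x = ZE.ofInt k ∧ D.eIter i k x ≠ none ∧ D.eIter i (k + 1) x = none) ∧
    (∃ k : ℕ, D.phi i x = ZE.ofInt k ∧ D.fIter i k x ≠ none ∧ D.fIter i (k + 1) x = none)

/-- Local axiom LQ1. -/
def LQ1 (D : QCData n Q) : Prop :=
  ∀ i x, i + 2 < n → (D.eps i x = 0 ↔ D.phi (i + 1) x = 0)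

/-- Local axiom LQ2 (its three parts). -/
def LQ2 (D : QCData n Q) : Prop :=
  ∀ i x y, i + 1 < n → D.e i x = some y →
    (∀ j, j + 1 < n → (i + 1 < j ∨ j + 1 < i) → D.eps j x = D.eps j y) ∧
    (i + 2 < n →
      (D.eps (i + 1) x ≠ D.eps (i + 1) y ↔ D.eps (i + 1) x = ZE.top ∧ D.eps i y = 0) ∧
      (D.eps (i + 1) x ≠ D.eps (i + 1) y → D.eps (i + 1) y ≠ 0)) ∧
    (∀ j, j + 1 = i →
      (D.phi j x ≠ D.phi j y ↔ D.phi j y = ZE.top ∧ D.phi i x = 0) ∧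
      (D.phi j x ≠ D.phi j y → D.phi j x ≠ 0))

/-- Local axiom LQ3. -/
def LQ3 (D : QCData n Q) : Prop :=
  ∀ i j x, i ≠ j → i + 1 < n → j + 1 < n → D.e i x ≠ none → D.e j x ≠ none →
    (D.e j x).bind (D.e i) = (D.e i x).bind (D.e j) ∧ (D.e j x).bind (D.e i) ≠ none

/-- Local axiom LQ3'. -/
def LQ3' (D : QCData n Q) : Prop :=
  ∀ i j x, i ≠ j → i + 1 < n → j + 1 < n → D.f i x ≠ none → D.f j x ≠ none →
    (D.f j x).bind (D.f i) = (D.f i x).bind (D.f j) ∧ (D.f j x).bind (D.f i) ≠ none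

/-- Stembridge axiom S1 (for type `A_{n-1}`: `α_i ⊥ α_j` iff `|i-j| > 1`). -/
def S1 (D : QCData n Q) : Prop :=
  ∀ i j x y, i + 1 < n → j + 1 < n → i ≠ j → D.e i x = some y →
    (D.eps j y = D.eps j x ∨ D.eps j y = D.eps j x + 1) ∧
    ((i + 1 < j ∨ j + 1 < i) → D.eps j y = D.eps j x ∧ D.phi j y = D.phi j x)

/-- Stembridge axiom S2. -/
def S2 (D : QCData n Q) : Prop :=
  ∀ i j x y, i + 1 < n → j + 1 < n → i ≠ j → D.e i x = some y →
    D.eps j y = D.eps j x → 0 < D.eps j x →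
    ((D.e j x).bind (D.e i) = (D.e i x).bind (D.e j) ∧ (D.e j x).bind (D.e i) ≠ none) ∧
    (∀ z, D.e j x = some z → D.phi i z = D.phi i x)

/-- Stembridge axiom S2'. -/
def S2' (D : QCData n Q) : Prop :=
  ∀ i j x y, i + 1 < n → j + 1 < n → i ≠ j → D.f i x = some y →
    D.phi j y = D.phi j x → 0 < D.phi j x →
    ((D.f j x).bind (D.f i) = (D.f i x).bind (D.f j) ∧ (D.f j x).bind (D.f i) ≠ none) ∧
    (∀ z, D.f j x = some z → D.eps i z = D.eps i x)

/-- Stembridge axiom S3. -/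
def S3 (D : QCData n Q) : Prop :=
  ∀ i j x y z, i + 1 < n → j + 1 < n → i ≠ j → D.e i x = some y → D.e j x = some z →
    D.eps j y = D.eps j x + 1 → D.eps i z = D.eps i x + 1 →
    ((((D.e i x).bind (D.e j)).bind (D.e j)).bind (D.e i) =
        (((D.e j x).bind (D.e i)).bind (D.e i)).bind (D.e j) ∧
      (((D.e i x).bind (D.e j)).bind (D.e j)).bind (D.e i) ≠ none) ∧
    (∀ w, ((D.e i x).bind (D.e j)).bind (D.e j) = some w → D.phi i z = D.phi i w) ∧
    (∀ w, ((D.e j x).bind (D.e i)).bind (D.e i) = some w → D.phi j y = D.phi j w)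

/-- Stembridge axiom S3'. -/
def S3' (D : QCData n Q) : Prop :=
  ∀ i j x y z, i + 1 < n → j + 1 < n → i ≠ j → D.f i x = some y → D.f j x = some z →
    D.phi j y = D.phi j x + 1 → D.phi i z = D.phi i x + 1 →
    ((((D.f i x).bind (D.f j)).bind (D.f j)).bind (D.f i) =
        (((D.f j x).bind (D.f i)).bind (D.f i)).bind (D.f j) ∧
      (((D.f i x).bind (D.f j)).bind (D.f j)).bind (D.f i) ≠ none) ∧
    (∀ w, ((D.f i x).bind (D.f j)).bind (D.f j) = some w → D.eps i z = D.eps i w) ∧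
    (∀ w, ((D.f j x).bind (D.f i)).bind (D.f i) = some w → D.eps j y = D.eps j w)

/-- `D` is a crystal: a quasi-crystal in which `ε̈_i, φ̈_i` never take the value `+∞`. -/
def IsCrystal (D : QCData n Q) : Prop :=
  IsQC D ∧ ∀ i x, i + 1 < n → D.eps i x ≠ ZE.top ∧ D.phi i x ≠ ZE.top

/-- A Stembridge crystal: a seminormal crystal satisfying S1, S2, S2', S3, S3'. -/
def IsStembridge (D : QCData n Q) : Prop :=
  IsCrystal D ∧ Seminormal D ∧ S1 D ∧ S2 D ∧ S2' D ∧ S3 D ∧ S3' D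

/-- Highest weight element. -/
def HW (D : QCData n Q) (u : Q) : Prop := ∀ i, i + 1 < n → D.e i u = none

/-- A single raising step. -/
def estep (D : QCData n Q) (a b : Q) : Prop := ∃ i, i + 1 < n ∧ D.e i a = some b

/-- The partial order `x ⪯ y`: `y` is obtained from `x` by applying raising operators. -/
def hwle (D : QCData n Q) (x y : Q) : Prop := Relation.ReflTransGen (estep D) x y

/-- A single step in the quasi-crystal graph (in either direction). -/
def step (D : QCData n Q) (a b : Q) : Prop :=
  ∃ i, i + 1 < n ∧ (D.e i a = some b ∨ D.f i a = some b)

/-- Connectedness of the quasi-crystal graph. -/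
def Connected (D : QCData n Q) : Prop := ∀ x y, Relation.ReflTransGen (step D) x y

/-- The quasi-tensor product of Cain–Guilherme–Malheiro. -/
noncomputable def tensor (A : QCData n Q) (B : QCData n Q') : QCData n (Q × Q') where
  e := fun i p =>
    if 0 < A.phi i p.1 ∧ 0 < B.eps i p.2 then none
    else if B.eps i p.2 ≤ A.phi i p.1 then (A.e i p.1).map (fun y => (y, p.2))
    else (B.e i p.2).map (fun y => (p.1, y))
  f := fun i p =>
    if 0 < A.phi i p.1 ∧ 0 < B.eps i p.2 then none
    else if B.eps i p.2 < A.phi i p.1 then (A.f i p.1).map (fun y => (y, p.2))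
    else (B.f i p.2).map (fun y => (p.1, y))
  eps := fun i p =>
    if 0 < A.phi i p.1 ∧ 0 < B.eps i p.2 then ZE.top
    else max (A.eps i p.1) (B.eps i p.2 + ZE.ofInt (-(pair (A.wt p.1) i)))
  phi := fun i p =>
    if 0 < A.phi i p.1 ∧ 0 < B.eps i p.2 then ZE.top
    else max (A.phi i p.1 + ZE.ofInt (pair (B.wt p.2) i)) (B.phi i p.2)
  wt := fun p m => A.wt p.1 m + B.wt p.2 m

/-- The standard crystal `B_n` of type `A_{n-1}` (elements `0, …, n-1`, 0-based). -/
def stdB (n : ℕ) : QCData n (Fin n) where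
  e := fun i x => if h : (x : ℕ) = i + 1 then some ⟨i, by have := x.isLt; omega⟩ else none
  f := fun i x => if h : (x : ℕ) = i ∧ i + 1 < n then some ⟨i + 1, h.2⟩ else none
  eps := fun i x => if (x : ℕ) = i + 1 then 1 else 0
  phi := fun i x => if (x : ℕ) = i then 1 else 0
  wt := fun x m => if m = (x : ℕ) then 1 else 0

/-- The `(k+1)`-fold quasi-tensor power `B_n^{⊗̈ (k+1)}` of the standard crystal. -/
noncomputable def stdPow (n : ℕ) : (k : ℕ) → Σ T : Type, QCData n T
  | 0 => ⟨Fin n, stdB n⟩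
  | k + 1 => ⟨(stdPow n k).1 × Fin n, tensor (stdPow n k).2 (stdB n)⟩

/-- The quasi-crystal `Q_C` obtained from a crystal `C` (Definition 4.6). -/
def crystalToQC (D : QCData n Q) : QCData n Q where
  e := fun i x => if D.eps i x = ZE.ofInt (D.wt x (i + 1)) then D.e i x else none
  f := fun i x =>
    (D.f i x).bind fun y => if D.eps i y = ZE.ofInt (D.wt y (i + 1)) then some y else none
  eps := fun i x => if D.eps i x = ZE.ofInt (D.wt x (i + 1)) then D.eps i x else ZE.top
  phi := fun i x =>
    (if D.eps i x = ZE.ofInt (D.wt x (i + 1)) then D.eps i x else ZE.top) +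
      ZE.ofInt (pair (D.wt x) i)
  wt := D.wt

end QCData

open QCData

section Aux

lemma ZE.ofInt_ne_top' (m : ℤ) : ZE.ofInt m ≠ ZE.top := by
  simp [ZE.ofInt, ZE.top]

lemma ZE.ofInt_inj' {a b : ℤ} : ZE.ofInt a = ZE.ofInt b ↔ a = b := by
  simp [ZE.ofInt]

lemma ZE.ofInt_zero' : ZE.ofInt 0 = 0 := by
  simp [ZE.ofInt]

lemma ZE.ofInt_eq_zero' {a : ℤ} : ZE.ofInt a = 0 ↔ a = 0 := by
  rw [← ZE.ofInt_zero', ZE.ofInt_inj']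

lemma ZE.top_add_one' : ZE.top + 1 = ZE.top := rfl

lemma ZE.ofInt_add_one' (a : ℤ) : ZE.ofInt a + 1 = ZE.ofInt (a + 1) := by
  simp [ZE.ofInt]

lemma ZE.eq_of_add_one' {u : ZE} {a : ℤ} (h : u + 1 = ZE.ofInt a) : u = ZE.ofInt (a - 1) := by
  match u with
  | ⊥ => simp [ZE.ofInt] at h
  | (⊤ : WithTop ℤ) =>
      rw [show ((⊤:WithTop ℤ):ZE) = ZE.top from rfl, ZE.top_add_one'] at h
      exact absurd h.symm (ZE.ofInt_ne_top' a)
  | ((m : ℤ) : WithTop ℤ) =>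
      rw [show (((m:ℤ):WithTop ℤ):ZE) = ZE.ofInt m from rfl, ZE.ofInt_add_one',
        ZE.ofInt_inj'] at h
      rw [show (((m:ℤ):WithTop ℤ):ZE) = ZE.ofInt m from rfl, ZE.ofInt_inj']; omega

variable {n : ℕ} {Q : Type*}

lemma eIter_succ' (D : QCData n Q) (i k : ℕ) (y : Q) :
    D.eIter i (k+1) y = (D.eIter i k y).bind (D.e i) := rfl

lemma fIter_succ' (D : QCData n Q) (i k : ℕ) (y : Q) :
    D.fIter i (k+1) y = (D.fIter i k y).bind (D.f i) := rfl

lemma eIter_mono' (D : QCData n Q) (i : ℕ) (y : Q) :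
    ∀ b, D.eIter i b y ≠ none → ∀ a, a ≤ b → D.eIter i a y ≠ none := by
  intro b
  induction b with
  | zero => intro h a ha; rw [Nat.le_zero.mp ha]; exact h
  | succ b ih =>
      intro h a ha
      have hb : D.eIter i b y ≠ none := by
        intro hc; apply h; rw [eIter_succ', hc]; rfl
      rcases Nat.lt_succ_iff_lt_or_eq.mp (Nat.lt_succ_of_le ha) with h' | h'
      · exact ih hb a (by omega)
      · rw [h']; exact h

lemma fIter_mono' (D : QCData n Q) (i : ℕ) (y : Q) :
    ∀ b, D.fIter i b y ≠ none → ∀ a, a ≤ b → D.fIter i a y ≠ none := by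
  intro b
  induction b with
  | zero => intro h a ha; rw [Nat.le_zero.mp ha]; exact h
  | succ b ih =>
      intro h a ha
      have hb : D.fIter i b y ≠ none := by
        intro hc; apply h; rw [fIter_succ', hc]; rfl
      rcases Nat.lt_succ_iff_lt_or_eq.mp (Nat.lt_succ_of_le ha) with h' | h'
      · exact ih hb a (by omega)
      · rw [h']; exact h

lemma chainE' (D : QCData n Q) (hQC : D.IsQC) (h2 : D.LQ2)
    (i : ℕ) (hi : i + 1 < n) (hi2 : i + 2 < n) (y : Q) (K : ℤ)
    (hKy : D.eps i y = ZE.ofInt K) (htop : D.eps (i+1) y = ZE.top) :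
    ∀ l : ℕ, (l : ℤ) < K → D.eIter i l y ≠ none →
      ∃ w, D.eIter i l y = some w ∧ D.eps i w = ZE.ofInt (K - l) ∧
        D.eps (i+1) w = ZE.top := by
  intro l
  induction l with
  | zero => intro _ _; exact ⟨y, rfl, by simpa using hKy, htop⟩
  | succ l ih =>
      intro hl hne
      have hl' : (l : ℤ) < K := by push_cast at hl ⊢; omega
      have hne' : D.eIter i l y ≠ none := by
        intro hc; apply hne; rw [eIter_succ', hc]; rfl
      obtain ⟨w, hw, hwe, hwt⟩ := ih hl' hne'
      have hbind : D.eIter i (l+1) y = D.e i w := by rw [eIter_succ', hw]; rfl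
      cases hW : D.e i w with
      | none => rw [hbind, hW] at hne; exact absurd rfl hne
      | some w' =>
          have hq1 := (hQC.2.1 i w w' hi hW).2.1
          rw [hwe] at hq1
          have hw'e : D.eps i w' = ZE.ofInt (K - (l+1)) := by
            have := ZE.eq_of_add_one' hq1.symm
            rw [this]; congr 1; push_cast; ring
          obtain ⟨hiff, _⟩ := (h2 i w w' hi hW).2.1 hi2
          have hw't : D.eps (i+1) w' = ZE.top := by
            by_contra hne2
            have hne3 : D.eps (i+1) w ≠ D.eps (i+1) w' := by
              rw [hwt]; exact fun h => hne2 h.symm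
            have h0 := (hiff.mp hne3).2
            rw [hw'e, ZE.ofInt_eq_zero'] at h0
            push_cast at hl; omega
          exact ⟨w', by rw [hbind, hW], hw'e, hw't⟩

lemma chainF' (D : QCData n Q) (hQC : D.IsQC) (h2 : D.LQ2)
    (i j : ℕ) (hi : i + 1 < n) (hj : j + 1 = i) (x : Q) (K : ℤ)
    (hKx : D.phi i x = ZE.ofInt K) (htop : D.phi j x = ZE.top) :
    ∀ l : ℕ, (l : ℤ) < K → D.fIter i l x ≠ none →
      ∃ w, D.fIter i l x = some w ∧ D.phi i w = ZE.ofInt (K - l) ∧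
        D.phi j w = ZE.top := by
  intro l
  induction l with
  | zero => intro _ _; exact ⟨x, rfl, by simpa using hKx, htop⟩
  | succ l ih =>
      intro hl hne
      have hl' : (l : ℤ) < K := by push_cast at hl ⊢; omega
      have hne' : D.fIter i l x ≠ none := by
        intro hc; apply hne; rw [fIter_succ', hc]; rfl
      obtain ⟨w, hw, hwe, hwt⟩ := ih hl' hne'
      have hbind : D.fIter i (l+1) x = D.f i w := by rw [fIter_succ', hw]; rfl
      cases hW : D.f i w with
      | none => rw [hbind, hW] at hne; exact absurd rfl hne
      | some w' =>
          have hE : D.e i w' = some w := (hQC.1 i w' w hi).mpr hW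
          have hq1 := (hQC.2.1 i w' w hi hE).2.2
          rw [hwe] at hq1
          have hw'e : D.phi i w' = ZE.ofInt (K - (l+1)) := by
            have := ZE.eq_of_add_one' hq1.symm
            rw [this]; congr 1; push_cast; ring
          obtain ⟨hiff, _⟩ := (h2 i w' w hi hE).2.2 j hj
          have hw't : D.phi j w' = ZE.top := by
            by_contra hne2
            have hne3 : D.phi j w' ≠ D.phi j w := by
              rw [hwt]; exact hne2
            have h0 := (hiff.mp hne3).2
            rw [hw'e, ZE.ofInt_eq_zero'] at h0
            push_cast at hl; omega
          exact ⟨w', by rw [hbind, hW], hw'e, hw't⟩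

end Aux

/-- Corollary 3.7: in a seminormal quasi-crystal graph satisfying LQ1 and LQ2,
with `ë_i(x) = y`. -/
theorem stmt2 {n : ℕ} {Q : Type*} (D : QCData n Q)
    (hQC : D.IsQC) (hsn : D.Seminormal) (h1 : D.LQ1) (h2 : D.LQ2)
    (i : ℕ) (hi : i + 1 < n) (x y : Q) (hxy : D.e i x = some y) :
    (i + 2 < n → D.eps (i + 1) y = ZE.top →
      D.eps (i + 1) x = ZE.top ∧
      ∃ k > 0, ∃ z, D.eIter i k y = some z ∧
        D.eps (i + 1) z ≠ 0 ∧ D.eps (i + 1) z ≠ ZE.top ∧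
        ∀ l < k, ∃ w, D.eIter i l y = some w ∧ D.eps i w ≠ 0 ∧ D.eps i w ≠ ZE.top) ∧
    (∀ j, j + 1 = i → D.phi j x = ZE.top →
      D.phi j y = ZE.top ∧
      ∃ k > 0, ∃ z, D.fIter i k x = some z ∧
        D.phi j z ≠ 0 ∧ D.phi j z ≠ ZE.top ∧
        ∀ l < k, ∃ w, D.fIter i l x = some w ∧ D.phi i w ≠ 0 ∧ D.phi i w ≠ ZE.top) := by
  obtain ⟨q1, q2, q3, q4, q5⟩ := hQC
  have hQC' : D.IsQC := ⟨q1, q2, q3, q4, q5⟩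
  have hxe : D.e i x ≠ none := by rw [hxy]; exact Option.some_ne_none y
  have hxtop : D.eps i x ≠ ZE.top := fun h => hxe (q5 i x hi h).1
  have hq2 := (q2 i x y hi hxy).2
  constructor
  · intro hi2 htopy
    have hytop : D.eps i y ≠ ZE.top := by
      intro hv; rw [hv, ZE.top_add_one'] at hq2; exact hxtop hq2.1
    obtain ⟨k', hk'eps, hk'ne, hk'none⟩ := (hsn i y hi hytop).1
    obtain ⟨hiff, hsnd⟩ := (h2 i x y hi hxy).2.1 hi2
    have heq : D.eps (i+1) x = D.eps (i+1) y := by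
      by_contra hne
      have := (hiff.mp hne).1
      rw [htopy] at hne; exact hne this
    have hxtop1 : D.eps (i+1) x = ZE.top := heq.trans htopy
    refine ⟨hxtop1, ?_⟩
    have hy0 : D.eps i y ≠ 0 := fun h0 => (hiff.mpr ⟨hxtop1, h0⟩) heq
    have hk'pos : 0 < k' := by
      rcases Nat.eq_zero_or_pos k' with h0 | h
      · rw [h0] at hk'eps
        exact absurd (by rw [hk'eps]; exact_mod_cast ZE.ofInt_zero') hy0
      · exact h
    obtain ⟨m, rfl⟩ : ∃ m, k' = m + 1 := ⟨k' - 1, by omega⟩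
    have hchain := chainE' D hQC' h2 i hi hi2 y _ hk'eps htopy
    have hmne : D.eIter i m y ≠ none := by
      intro hc; apply hk'ne; rw [eIter_succ', hc]; rfl
    obtain ⟨w, hw, hwe, hwt⟩ := hchain m (by push_cast; omega) hmne
    have hwe1 : D.eps i w = ZE.ofInt 1 := by
      rw [hwe]; congr 1; push_cast; ring
    have hbind : D.eIter i (m+1) y = D.e i w := by rw [eIter_succ', hw]; rfl
    cases hz : D.e i w with
    | none => rw [hbind, hz] at hk'ne; exact absurd rfl hk'ne
    | some z =>
        have hq1z := (q2 i w z hi hz).2.1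
        rw [hwe1] at hq1z
        have hz0 : D.eps i z = 0 := by
          have := ZE.eq_of_add_one' hq1z.symm
          rw [this]; norm_num [ZE.ofInt_zero']
        obtain ⟨hiff2, hsnd2⟩ := (h2 i w z hi hz).2.1 hi2
        have hne2 : D.eps (i+1) w ≠ D.eps (i+1) z := hiff2.mpr ⟨hwt, hz0⟩
        refine ⟨m + 1, by omega, z, by rw [hbind, hz], hsnd2 hne2, ?_, ?_⟩
        · intro h; exact hne2 (hwt.trans h.symm)
        · intro l hl
          have hlne : D.eIter i l y ≠ none :=
            eIter_mono' D i y (m+1) hk'ne l (by omega)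
          obtain ⟨w', hw', hwe', _⟩ := hchain l (by push_cast; omega) hlne
          refine ⟨w', hw', ?_, by rw [hwe']; exact ZE.ofInt_ne_top' _⟩
          intro hc
          rw [hwe'] at hc
          have := ZE.ofInt_eq_zero'.mp hc
          omega
  · intro j hj hjx
    obtain ⟨hiff3, hsnd3⟩ := (h2 i x y hi hxy).2.2 j hj
    have heq : D.phi j x = D.phi j y := by
      by_contra hne
      have := (hiff3.mp hne).1
      rw [hjx] at hne; exact hne this.symm
    have hytopj : D.phi j y = ZE.top := by rw [← heq]; exact hjx
    refine ⟨hytopj, ?_⟩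
    have hx0 : D.phi i x ≠ 0 := fun h0 => (hiff3.mpr ⟨hytopj, h0⟩) heq
    obtain ⟨k, hk, hkne, hknone⟩ := (hsn i x hi hxtop).2
    have hkpos : 0 < k := by
      rcases Nat.eq_zero_or_pos k with h0 | h
      · rw [h0] at hk
        exact absurd (by rw [hk]; exact_mod_cast ZE.ofInt_zero') hx0
      · exact h
    obtain ⟨m, rfl⟩ : ∃ m, k = m + 1 := ⟨k - 1, by omega⟩
    have hchain := chainF' D hQC' h2 i j hi hj x _ hk hjx
    have hmne : D.fIter i m x ≠ none := by
      intro hc; apply hkne; rw [fIter_succ', hc]; rfl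
    obtain ⟨w, hw, hwe, hwt⟩ := hchain m (by push_cast; omega) hmne
    have hwe1 : D.phi i w = ZE.ofInt 1 := by
      rw [hwe]; congr 1; push_cast; ring
    have hbind : D.fIter i (m+1) x = D.f i w := by rw [fIter_succ', hw]; rfl
    cases hz : D.f i w with
    | none => rw [hbind, hz] at hkne; exact absurd rfl hkne
    | some z =>
        have hE : D.e i z = some w := (q1 i z w hi).mpr hz
        have hq1z := (q2 i z w hi hE).2.2
        rw [hwe1] at hq1z
        have hz0 : D.phi i z = 0 := by
          have := ZE.eq_of_add_one' hq1z.symm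
          rw [this]; norm_num [ZE.ofInt_zero']
        obtain ⟨hiff4, hsnd4⟩ := (h2 i z w hi hE).2.2 j hj
        have hne4 : D.phi j z ≠ D.phi j w := hiff4.mpr ⟨hwt, hz0⟩
        refine ⟨m + 1, by omega, z, by rw [hbind, hz], hsnd4 hne4, ?_, ?_⟩
        · intro h; exact hne4 (h.trans hwt.symm)
        · intro l hl
          have hlne : D.fIter i l x ≠ none :=
            fIter_mono' D i x (m+1) hkne l (by omega)
          obtain ⟨w', hw', hwe', _⟩ := hchain l (by push_cast; omega) hlne
          refine ⟨w', hw', ?_, by rw [hwe']; exact ZE.ofInt_ne_top' _⟩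
          intro hc
          rw [hwe'] at hc
          have := ZE.ofInt_eq_zero'.mp hc
          omega
end

section
/- Let Q and Q' be seminormal quasi-crystal graphs of type A_{n−1} satisfying the local quasi-crystal axioms. Then the quasi-tensor product Q ⊗̈ Q' satisfies axiom LQ1: for all x ∈ Q, x' ∈ Q' and i with i, i+1 ∈ I, one has ε̈_i(x ⊗̈ x') = 0 if and only if φ̈_{i+1}(x ⊗̈ x') = 0. -/
open scoped Classical

open QCData


lemma ze_ofInt_add (a b : ℤ) : ZE.ofInt a + ZE.ofInt b = ZE.ofInt (a + b) := by
  rw [ZE.ofInt, ZE.ofInt, ZE.ofInt, ← WithBot.coe_add, ← WithTop.coe_add]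

lemma ze_top_add (a : ℤ) : ZE.top + ZE.ofInt a = ZE.top := by
  rw [ZE.top, ZE.ofInt, ← WithBot.coe_add, WithTop.top_add]

lemma ze_top_eq : ZE.top = (⊤ : ZE) := rfl

lemma ze_ofInt_eq_zero (a : ℤ) : ZE.ofInt a = 0 ↔ a = 0 := by simp [ZE.ofInt]

lemma ze_ofInt_ne_top (a : ℤ) : ZE.ofInt a ≠ ZE.top := by simp [ZE.ofInt, ZE.top]

lemma ze_zero_eq : (0 : ZE) = ZE.ofInt 0 := rfl

lemma ze_top_ne_zero : ZE.top ≠ 0 := by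
  rw [ze_zero_eq]
  exact fun h => ze_ofInt_ne_top 0 h.symm

lemma ze_zero_lt_ofInt (a : ℤ) : 0 < ZE.ofInt a ↔ 0 < a := by simp [ZE.ofInt]
lemma ze_zero_le_ofInt (a : ℤ) : 0 ≤ ZE.ofInt a ↔ 0 ≤ a := by simp [ZE.ofInt]
lemma ze_zero_lt_top : (0 : ZE) < ZE.top := by
  rw [ze_top_eq]
  exact lt_of_le_of_ne le_top (by rw [← ze_top_eq]; exact fun h => ze_top_ne_zero h.symm)
lemma ze_max_top_left (x : ZE) : max ZE.top x = ZE.top := by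
  rw [ze_top_eq]; exact max_eq_left le_top
lemma ze_max_top_right (x : ZE) : max x ZE.top = ZE.top := by
  rw [ze_top_eq]; exact max_eq_right le_top
lemma ze_max_ofInt (a b : ℤ) : max (ZE.ofInt a) (ZE.ofInt b) = ZE.ofInt (max a b) := by
  rcases le_total a b with h | h
  · rw [max_eq_right h, max_eq_right]; simp [ZE.ofInt, h]
  · rw [max_eq_left h, max_eq_left]; simp [ZE.ofInt, h]

lemma ze_aux_eps (a b : ZE) (δ : ℤ)
    (ha : a = ZE.top ∨ ∃ k : ℕ, a = ZE.ofInt k)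
    (hb : b = ZE.top ∨ ∃ k : ℕ, b = ZE.ofInt k)
    (hp : a ≠ ZE.top → 0 ≤ a + ZE.ofInt δ) :
    (if 0 < a + ZE.ofInt δ ∧ 0 < b then ZE.top else max a (b + ZE.ofInt (-δ))) = 0 ↔
      a = 0 ∧ b = 0 := by
  rcases ha with ha | ⟨k, ha⟩
  · subst ha
    have hne : ZE.top = 0 ∧ b = 0 ↔ False := by
      simp [ze_top_ne_zero]
    rw [hne, iff_false]
    split_ifs with h
    · exact ze_top_ne_zero
    · rw [ze_max_top_left]; exact ze_top_ne_zero
  · subst ha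
    have hk0 : 0 ≤ (k : ℤ) + δ := by
      have := hp (ze_ofInt_ne_top _)
      rw [ze_ofInt_add, ze_zero_le_ofInt] at this
      exact this
    rcases hb with hb | ⟨m, hb⟩
    · subst hb
      have hne : ZE.ofInt k = 0 ∧ ZE.top = 0 ↔ False := by
        simp [ze_top_ne_zero]
      rw [hne, iff_false]
      split_ifs with h
      · exact ze_top_ne_zero
      · rw [ze_top_add, ze_max_top_right]; exact ze_top_ne_zero
    · subst hb
      rw [ze_ofInt_add, ze_ofInt_add]
      split_ifs with h
      · rw [ze_zero_lt_ofInt, ze_zero_lt_ofInt] at h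
        simp only [ze_ofInt_eq_zero, ze_top_ne_zero, false_iff]
        omega
      · rw [ze_zero_lt_ofInt, ze_zero_lt_ofInt] at h
        rw [ze_max_ofInt, ze_ofInt_eq_zero, ze_ofInt_eq_zero, ze_ofInt_eq_zero]
        rcases le_total (k : ℤ) ((m : ℤ) + -δ) with hle | hle
        · rw [max_eq_right hle] at *; omega
        · rw [max_eq_left hle] at *; omega

lemma ze_aux_phi (a b : ZE) (δ γ : ℤ)
    (ha : a = ZE.top ∨ ∃ k : ℕ, a = ZE.ofInt k)
    (hb : b = ZE.top ∨ ∃ k : ℕ, b = ZE.ofInt k)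
    (hp : a ≠ ZE.top → 0 ≤ a + ZE.ofInt δ)
    (hq : b ≠ ZE.top → 0 ≤ b + ZE.ofInt γ) :
    (if 0 < a + ZE.ofInt δ ∧ 0 < b then ZE.top
      else max (a + ZE.ofInt δ + ZE.ofInt γ) (b + ZE.ofInt γ)) = 0 ↔
      a + ZE.ofInt δ = 0 ∧ b + ZE.ofInt γ = 0 := by
  rcases ha with ha | ⟨k, ha⟩
  · subst ha
    rw [ze_top_add, ze_top_add]
    have hne : ZE.top = 0 ∧ b + ZE.ofInt γ = 0 ↔ False := by
      simp [ze_top_ne_zero]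
    rw [hne, iff_false]
    split_ifs with h
    · exact ze_top_ne_zero
    · rw [ze_max_top_left]; exact ze_top_ne_zero
  · subst ha
    have hk0 : 0 ≤ (k : ℤ) + δ := by
      have := hp (ze_ofInt_ne_top _)
      rw [ze_ofInt_add, ze_zero_le_ofInt] at this
      exact this
    rcases hb with hb | ⟨m, hb⟩
    · subst hb
      rw [ze_top_add]
      have hne : ZE.ofInt k + ZE.ofInt δ = 0 ∧ ZE.top = 0 ↔ False := by
        simp [ze_top_ne_zero]
      rw [hne, iff_false]
      split_ifs with h
      · exact ze_top_ne_zero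
      · rw [ze_max_top_right]; exact ze_top_ne_zero
    · subst hb
      have hm0 : 0 ≤ (m : ℤ) + γ := by
        have := hq (ze_ofInt_ne_top _)
        rw [ze_ofInt_add, ze_zero_le_ofInt] at this
        exact this
      rw [ze_ofInt_add, ze_ofInt_add, ze_ofInt_add]
      split_ifs with h
      · rw [ze_zero_lt_ofInt, ze_zero_lt_ofInt] at h
        simp only [ze_ofInt_eq_zero, ze_top_ne_zero, false_iff]
        omega
      · rw [ze_zero_lt_ofInt, ze_zero_lt_ofInt] at h
        rw [ze_max_ofInt, ze_ofInt_eq_zero, ze_ofInt_eq_zero, ze_ofInt_eq_zero]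
        rcases le_total ((k : ℤ) + δ + γ) ((m : ℤ) + γ) with hle | hle
        · rw [max_eq_right hle] at *; omega
        · rw [max_eq_left hle] at *; omega

/-- Proposition 3.19: the quasi-tensor product satisfies axiom LQ1. -/
theorem stmt9 {n : ℕ} {Q Q' : Type*} (A : QCData n Q) (B : QCData n Q')
    (hA : A.IsQC) (hAsn : A.Seminormal)
    (hA1 : A.LQ1) (hA2 : A.LQ2) (hA3 : A.LQ3) (hA3' : A.LQ3')
    (hB : B.IsQC) (hBsn : B.Seminormal)
    (hB1 : B.LQ1) (hB2 : B.LQ2) (hB3 : B.LQ3) (hB3' : B.LQ3') :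
    (tensor A B).LQ1 := by
  intro i x hi
  obtain ⟨x1, x2⟩ := x
  have hi1 : i + 1 < n := by omega
  have hi2 : i + 1 + 1 < n := by omega
  have q2A1 := hA.2.2.1 i x1 hi1
  have q2A2 := hA.2.2.1 (i + 1) x1 hi2
  have q2B2 := hB.2.2.1 (i + 1) x2 hi2
  have haA : ∀ j, j + 1 < n → A.eps j x1 = ZE.top ∨ ∃ k : ℕ, A.eps j x1 = ZE.ofInt k := by
    intro j hj
    by_cases h : A.eps j x1 = ZE.top
    · exact Or.inl h
    · obtain ⟨⟨k, hk, -, -⟩, -⟩ := hAsn j x1 hj h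
      exact Or.inr ⟨k, hk⟩
  have hbB : ∀ j, j + 1 < n → B.eps j x2 = ZE.top ∨ ∃ k : ℕ, B.eps j x2 = ZE.ofInt k := by
    intro j hj
    by_cases h : B.eps j x2 = ZE.top
    · exact Or.inl h
    · obtain ⟨⟨k, hk, -, -⟩, -⟩ := hBsn j x2 hj h
      exact Or.inr ⟨k, hk⟩
  have hpA : ∀ j, j + 1 < n → A.eps j x1 ≠ ZE.top →
      0 ≤ A.eps j x1 + ZE.ofInt (pair (A.wt x1) j) := by
    intro j hj h
    obtain ⟨-, k, hk, -, -⟩ := hAsn j x1 hj h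
    rw [← hA.2.2.1 j x1 hj, hk, ze_zero_le_ofInt]
    exact Int.ofNat_nonneg k
  have hqB : ∀ j, j + 1 < n → B.eps j x2 ≠ ZE.top →
      0 ≤ B.eps j x2 + ZE.ofInt (pair (B.wt x2) j) := by
    intro j hj h
    obtain ⟨-, k, hk, -, -⟩ := hBsn j x2 hj h
    rw [← hB.2.2.1 j x2 hj, hk, ze_zero_le_ofInt]
    exact Int.ofNat_nonneg k
  show (if 0 < A.phi i x1 ∧ 0 < B.eps i x2 then ZE.top
      else max (A.eps i x1) (B.eps i x2 + ZE.ofInt (-(pair (A.wt x1) i)))) = 0 ↔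
    (if 0 < A.phi (i + 1) x1 ∧ 0 < B.eps (i + 1) x2 then ZE.top
      else max (A.phi (i + 1) x1 + ZE.ofInt (pair (B.wt x2) (i + 1))) (B.phi (i + 1) x2)) = 0
  rw [q2A1, q2A2, q2B2]
  rw [ze_aux_eps _ _ _ (haA i hi1) (hbB i hi1) (hpA i hi1),
    ze_aux_phi _ _ _ _ (haA (i + 1) hi2) (hbB (i + 1) hi2) (hpA (i + 1) hi2) (hqB (i + 1) hi2)]
  rw [← q2A2, ← q2B2]
  exact and_congr (hA1 i x1 hi) (hB1 i x2 hi)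
end
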